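/- arXiv:1601.06219 — 3 statements merged into one kernel-verified Lean document; each statement's English description precedes it below -/
import Mathlib

section
/- Let 𝒱 be a finite set of vectors in ℝ^d with max_{v∈𝒱} ‖v‖ =: V₀ > 0, and suppose 0 ≤ λ_v ≤ R for all v ∈ 𝒱. Define L(β) = sup_{θ∈ℝ^d}(⟨θ,β⟩ − ∑_{v∈𝒱} λ_v(e^{⟨θ,v⟩} − 1)). Then for every β ∈ ℝ^d with ‖β‖ > 1, L(β) ≥ (1/V₀)·‖β‖·log‖β‖ − R·|𝒱|·‖β‖. In particular, there exist B < ∞ and c₁ > 0 such that L(β) ≥ c₁‖β‖ log‖β‖ whenever ‖β‖ > B. -/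
/-- Superlinear lower bound on the local rate function
`L(β) = sup_θ (⟨θ,β⟩ − ∑_v λ_v (e^{⟨θ,v⟩} − 1))` of a jump Markov process with
jump directions of Euclidean norm at most `V₀` (attained) and rates `0 ≤ λ_v ≤ R`. -/
theorem stmt4 (d : ℕ) (V : Finset (EuclideanSpace ℝ (Fin d))) (V0 R : ℝ)
    (hV0 : IsGreatest ((fun v => ‖v‖) '' (V : Set (EuclideanSpace ℝ (Fin d)))) V0)
    (hV0pos : 0 < V0)
    (lam : EuclideanSpace ℝ (Fin d) → ℝ)
    (hlam : ∀ v ∈ V, lam v ∈ Set.Icc (0 : ℝ) R) :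
    (∀ β : EuclideanSpace ℝ (Fin d), 1 < ‖β‖ →
      ((1 / V0 * ‖β‖ * Real.log ‖β‖ - R * V.card * ‖β‖ : ℝ) : EReal) ≤
        ⨆ θ : EuclideanSpace ℝ (Fin d),
          (((@inner ℝ _ _ θ β : ℝ)
              - ∑ v ∈ V, lam v * (Real.exp (@inner ℝ _ _ θ v : ℝ) - 1) : ℝ) : EReal)) ∧
    ∃ B : ℝ, ∃ c₁ > (0 : ℝ), ∀ β : EuclideanSpace ℝ (Fin d), B < ‖β‖ →
      ((c₁ * ‖β‖ * Real.log ‖β‖ : ℝ) : EReal) ≤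
        ⨆ θ : EuclideanSpace ℝ (Fin d),
          (((@inner ℝ _ _ θ β : ℝ)
              - ∑ v ∈ V, lam v * (Real.exp (@inner ℝ _ _ θ v : ℝ) - 1) : ℝ) : EReal) := by
  -- R ≥ 0
  obtain ⟨v₀, hv₀V, hv₀⟩ := hV0.1
  have hRnn : (0 : ℝ) ≤ R := le_trans (hlam v₀ hv₀V).1 (hlam v₀ hv₀V).2
  have main : ∀ β : EuclideanSpace ℝ (Fin d), 1 < ‖β‖ →
      ((1 / V0 * ‖β‖ * Real.log ‖β‖ - R * V.card * ‖β‖ : ℝ) : EReal) ≤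
        ⨆ θ : EuclideanSpace ℝ (Fin d),
          (((@inner ℝ _ _ θ β : ℝ)
              - ∑ v ∈ V, lam v * (Real.exp (@inner ℝ _ _ θ v : ℝ) - 1) : ℝ) : EReal) := by
    intro β hβ
    have hβpos : (0 : ℝ) < ‖β‖ := lt_trans one_pos hβ
    have hlog : (0 : ℝ) < Real.log ‖β‖ := Real.log_pos hβ
    set t : ℝ := Real.log ‖β‖ / V0 with ht
    have htpos : 0 < t := div_pos hlog hV0pos
    set θ : EuclideanSpace ℝ (Fin d) := (t / ‖β‖) • β with hθ
    have hinner : (@inner ℝ _ _ θ β : ℝ) = t * ‖β‖ := by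
      rw [hθ, real_inner_smul_left, real_inner_self_eq_norm_sq]
      field_simp
    have hθnorm : ‖θ‖ = t := by
      rw [hθ, norm_smul]
      rw [Real.norm_eq_abs, abs_of_pos (div_pos htpos hβpos)]
      field_simp
    have hterm : ∀ v ∈ V, lam v * (Real.exp (@inner ℝ _ _ θ v : ℝ) - 1) ≤ R * ‖β‖ := by
      intro v hv
      have h1 : (@inner ℝ _ _ θ v : ℝ) ≤ Real.log ‖β‖ := by
        have := real_inner_le_norm θ v
        have hvn : ‖v‖ ≤ V0 := hV0.2 ⟨v, hv, rfl⟩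
        have : (@inner ℝ _ _ θ v : ℝ) ≤ t * V0 := by
          calc (@inner ℝ _ _ θ v : ℝ) ≤ ‖θ‖ * ‖v‖ := real_inner_le_norm θ v
            _ ≤ t * V0 := by
              rw [hθnorm]; exact mul_le_mul_of_nonneg_left hvn htpos.le
        calc (@inner ℝ _ _ θ v : ℝ) ≤ t * V0 := this
          _ = Real.log ‖β‖ := by rw [ht]; field_simp
      have h2 : Real.exp (@inner ℝ _ _ θ v : ℝ) ≤ ‖β‖ := by
        calc Real.exp (@inner ℝ _ _ θ v : ℝ) ≤ Real.exp (Real.log ‖β‖) :=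
              Real.exp_le_exp.mpr h1
          _ = ‖β‖ := Real.exp_log hβpos
      obtain ⟨hl0, hlR⟩ := hlam v hv
      nlinarith [mul_nonneg hl0 (sub_nonneg.mpr h2), mul_nonneg (sub_nonneg.mpr hlR) hβpos.le]
    have hsum : ∑ v ∈ V, lam v * (Real.exp (@inner ℝ _ _ θ v : ℝ) - 1) ≤ R * V.card * ‖β‖ := by
      calc ∑ v ∈ V, lam v * (Real.exp (@inner ℝ _ _ θ v : ℝ) - 1)
          ≤ ∑ _v ∈ V, R * ‖β‖ := Finset.sum_le_sum hterm
        _ = R * V.card * ‖β‖ := by rw [Finset.sum_const, nsmul_eq_mul]; ring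
    have hval : (1 / V0 * ‖β‖ * Real.log ‖β‖ - R * V.card * ‖β‖ : ℝ) ≤
        (@inner ℝ _ _ θ β : ℝ) - ∑ v ∈ V, lam v * (Real.exp (@inner ℝ _ _ θ v : ℝ) - 1) := by
      rw [hinner]
      have : (1 / V0 * ‖β‖ * Real.log ‖β‖ : ℝ) = t * ‖β‖ := by rw [ht]; field_simp
      linarith
    calc ((1 / V0 * ‖β‖ * Real.log ‖β‖ - R * V.card * ‖β‖ : ℝ) : EReal)
        ≤ (((@inner ℝ _ _ θ β : ℝ)
            - ∑ v ∈ V, lam v * (Real.exp (@inner ℝ _ _ θ v : ℝ) - 1) : ℝ) : EReal) :=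
          EReal.coe_le_coe_iff.mpr hval
      _ ≤ _ := le_iSup (fun θ : EuclideanSpace ℝ (Fin d) =>
          (((@inner ℝ _ _ θ β : ℝ)
              - ∑ v ∈ V, lam v * (Real.exp (@inner ℝ _ _ θ v : ℝ) - 1) : ℝ) : EReal)) θ
  refine ⟨main, Real.exp (2 * V0 * (R * V.card)), 1 / (2 * V0), by positivity, ?_⟩
  intro β hB
  have hexp1 : (1 : ℝ) ≤ Real.exp (2 * V0 * (R * V.card)) := by
    have : (0:ℝ) ≤ 2 * V0 * (R * V.card) := by positivity
    exact Real.one_le_exp this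
  have hβ1 : 1 < ‖β‖ := lt_of_le_of_lt hexp1 hB
  have hβpos : (0:ℝ) < ‖β‖ := lt_trans one_pos hβ1
  have hlog : 2 * V0 * (R * V.card) < Real.log ‖β‖ := by
    have := Real.log_lt_log (Real.exp_pos _) hB
    rwa [Real.log_exp] at this
  have key : (1 / (2 * V0) * ‖β‖ * Real.log ‖β‖ : ℝ) ≤
      (1 / V0 * ‖β‖ * Real.log ‖β‖ - R * V.card * ‖β‖ : ℝ) := by
    have h : R * V.card * ‖β‖ ≤ 1 / (2 * V0) * ‖β‖ * Real.log ‖β‖ := by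
      rw [div_mul_eq_mul_div, div_mul_eq_mul_div, le_div_iff₀ (by positivity)]
      nlinarith
    have h2 : 1 / (2 * V0) * ‖β‖ * Real.log ‖β‖ + 1 / (2 * V0) * ‖β‖ * Real.log ‖β‖
        = 1 / V0 * ‖β‖ * Real.log ‖β‖ := by field_simp; ring
    linarith
  exact le_trans (EReal.coe_le_coe_iff.mpr key) (main β hβ1)
end

section
/- Let γ : [a,b] → ℝ^d be absolutely continuous and suppose that s ↦ ‖γ'(s)‖ log‖γ'(s)‖ is integrable on [a,b] (interpreting x log x as 0 at x = 0). Then ‖γ(t) − γ(a)‖ · log(1/(t−a)) → 0 as t ↓ a. -/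
/-!
Split `‖γ'‖` at a level `K > 1`: where `‖γ'‖ ≤ K` it contributes at most `K (t - a)` to
`‖γ t - γ a‖`, and where `‖γ'‖ > K` it is at most `‖γ'‖ log ‖γ'‖ / log K`. Choosing
`K = (t - a) ^ (-1/2)`, so that `log K = log (1 / (t - a)) / 2`, gives
`‖γ t - γ a‖ log (1 / (t - a)) ≤ √(t - a) log (1 / (t - a)) + 2 ∫_a^t |‖γ'‖ log ‖γ'‖|`,
and both terms tend to `0` as `t ↓ a`, the second by absolute continuity of the integral.
-/

open MeasureTheory Real Set Filter Topology

lemma le_add_abs_mul_log_div_log {x K : ℝ} (hx : 0 ≤ x) (hK : 1 < K) :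
    x ≤ K + |x * log x| / log K := by
  have hlogK : 0 < log K := log_pos hK
  rcases le_or_gt x K with hxK | hKx
  · linarith [div_nonneg (abs_nonneg (x * log x)) hlogK.le]
  · have : x * log K ≤ |x * log x| :=
      (mul_le_mul_of_nonneg_left (log_le_log (by linarith) hKx.le) hx).trans (le_abs_self _)
    linarith [(le_div_iff₀ hlogK).2 this]

section

variable {E : Type*} [NormedAddCommGroup E] [NormedSpace ℝ E] {f : ℝ → E} {a b t : ℝ}

lemma norm_intervalIntegral_le_add_integral_mul_log_div {K : ℝ} (hat : a ≤ t) (hK : 1 < K)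
    (hf : IntervalIntegrable (fun s => ‖f s‖ * log ‖f s‖) volume a t) :
    ‖∫ s in a..t, f s‖ ≤ K * (t - a) + (∫ s in a..t, |‖f s‖ * log ‖f s‖|) / log K := by
  have hbound : IntervalIntegrable (fun s => K + |‖f s‖ * log ‖f s‖| / log K) volume a t :=
    intervalIntegrable_const.add (hf.abs.div_const _)
  calc ‖∫ s in a..t, f s‖ ≤ ∫ s in a..t, (K + |‖f s‖ * log ‖f s‖| / log K) :=
        intervalIntegral.norm_integral_le_of_norm_le hat
          (ae_of_all _ fun s _ => le_add_abs_mul_log_div_log (norm_nonneg _) hK) hbound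
    _ = K * (t - a) + (∫ s in a..t, |‖f s‖ * log ‖f s‖|) / log K := by
        rw [intervalIntegral.integral_add intervalIntegrable_const (hf.abs.div_const _),
          intervalIntegral.integral_const, intervalIntegral.integral_div, smul_eq_mul, mul_comm]

lemma norm_intervalIntegral_mul_log_le (hat : a < t) (ht : t - a < 1)
    (hf : IntervalIntegrable (fun s => ‖f s‖ * log ‖f s‖) volume a t) :
    ‖∫ s in a..t, f s‖ * log (1 / (t - a)) ≤
      √(t - a) * log (1 / (t - a)) + 2 * ∫ s in a..t, |‖f s‖ * log ‖f s‖| := by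
  set h := t - a
  have hh : 0 < h := sub_pos.2 hat
  have hL : 0 < log (1 / h) := log_pos ((one_lt_div hh).2 ht)
  have hK : 1 < (√h)⁻¹ := (one_lt_inv₀ (sqrt_pos.2 hh)).2 ((sqrt_lt' one_pos).2 (by rwa [one_pow]))
  have hlogK : log (√h)⁻¹ = log (1 / h) / 2 := by
    rw [log_inv, log_sqrt hh.le, one_div, log_inv]; ring
  have hKh : (√h)⁻¹ * h = √h := by rw [inv_mul_eq_div, div_sqrt]
  calc ‖∫ s in a..t, f s‖ * log (1 / h)
      ≤ ((√h)⁻¹ * h + (∫ s in a..t, |‖f s‖ * log ‖f s‖|) / log (√h)⁻¹) * log (1 / h) :=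
        mul_le_mul_of_nonneg_right
          (norm_intervalIntegral_le_add_integral_mul_log_div hat.le hK hf) hL.le
    _ = √h * log (1 / h) + 2 * ∫ s in a..t, |‖f s‖ * log ‖f s‖| := by
        rw [hKh, hlogK]; field_simp

lemma tendsto_intervalIntegral_nhdsGT (hab : a < b) (hf : IntegrableOn f (Icc a b)) :
    Tendsto (fun t => ∫ s in a..t, f s) (𝓝[>] a) (𝓝 0) := by
  rw [← uIcc_of_le hab.le] at hf
  have := (intervalIntegral.continuousOn_primitive_interval hf a left_mem_uIcc).tendsto
  rw [intervalIntegral.integral_same] at this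
  exact this.mono_left (nhdsWithin_le_of_mem (by rw [uIcc_of_le hab.le]; exact Icc_mem_nhdsGT hab))

end

lemma tendsto_sqrt_mul_log_one_div_nhdsGT_zero :
    Tendsto (fun h : ℝ => √h * log (1 / h)) (𝓝[>] 0) (𝓝 0) := by
  have := (tendsto_log_mul_rpow_nhdsGT_zero (r := 1 / 2) one_half_pos).neg
  rw [neg_zero] at this
  exact this.congr fun h => by simp only [one_div, log_inv, sqrt_eq_rpow, mul_neg, mul_comm]

theorem stmt5_general (d : ℕ) (a b : ℝ) (hab : a < b)
    (γ γ' : ℝ → EuclideanSpace ℝ (Fin d))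
    (hγ : ∀ t ∈ Set.Icc a b, γ t = γ a + ∫ s in a..t, γ' s)
    (hlog : IntegrableOn (fun s => ‖γ' s‖ * Real.log ‖γ' s‖) (Set.Icc a b)) :
    Filter.Tendsto (fun t => ‖γ t - γ a‖ * Real.log (1 / (t - a)))
      (nhdsWithin a (Set.Ioi a)) (nhds 0) := by
  have hnear : ∀ᶠ t in 𝓝[>] a, t ∈ Ioo a (min b (a + 1)) :=
    Ioo_mem_nhdsGT (lt_min hab (lt_add_one a))
  have hshift : Tendsto (fun t => t - a) (𝓝[>] a) (𝓝[>] 0) := by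
    rw [Tendsto, map_subRight_nhdsGT, sub_self]
  have hbound := (tendsto_sqrt_mul_log_one_div_nhdsGT_zero.comp hshift).add
    ((tendsto_intervalIntegral_nhdsGT hab hlog.abs).const_mul 2)
  rw [zero_add, mul_zero] at hbound
  refine squeeze_zero' ?_ ?_ hbound
  · filter_upwards [hnear] with t ⟨hat, htb⟩
    have ht1 : t - a ≤ 1 := by linarith [min_le_right b (a + 1)]
    exact mul_nonneg (norm_nonneg _) (log_nonneg ((one_le_div (sub_pos.2 hat)).2 ht1))
  · filter_upwards [hnear] with t ⟨hat, htb⟩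
    have htb' : t ≤ b := htb.le.trans (min_le_left _ _)
    rw [hγ t ⟨hat.le, htb'⟩, add_sub_cancel_left]
    exact norm_intervalIntegral_mul_log_le hat (by linarith [min_le_right b (a + 1)])
      ((intervalIntegrable_iff_integrableOn_Icc_of_le hat.le).2
        (hlog.mono_set (Icc_subset_Icc_right htb')))

/-- If `γ : [a,b] → ℝ^d` is absolutely continuous (with derivative `γ'`) and
`s ↦ ‖γ'(s)‖ log ‖γ'(s)‖` is integrable on `[a,b]`, then
`‖γ(t) − γ(a)‖ · log(1/(t−a)) → 0` as `t ↓ a`. -/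
theorem stmt5 (d : ℕ) (a b : ℝ) (hab : a < b)
    (γ γ' : ℝ → EuclideanSpace ℝ (Fin d))
    (hint : IntegrableOn γ' (Set.Icc a b))
    (hγ : ∀ t ∈ Set.Icc a b, γ t = γ a + ∫ s in a..t, γ' s)
    (hlog : IntegrableOn (fun s => ‖γ' s‖ * Real.log ‖γ' s‖) (Set.Icc a b)) :
    Filter.Tendsto (fun t => ‖γ t - γ a‖ * Real.log (1 / (t - a)))
      (nhdsWithin a (Set.Ioi a)) (nhds 0) :=
  stmt5_general d a b hab γ γ' hγ hlog
end

section
/- Let R₁ > 0, D ≥ 0, and c̄ > 0. Suppose u : [0,1] → ℝ is differentiable with u(0) ≥ 0 and u̇(t) ≥ c̄ t^D − R₁ u(t) for all t ∈ [0,1]. Then u(t) ≥ b t^{D+1} for all t ∈ [0,1], where b = e^{−R₁} c̄ / (D+1). -/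
/-!
The barrier `v t = b t^(D+1)`, `b = e^(-R₁) c̄ / (D+1)`, is a subsolution of `v' + R₁ v = c̄ t^D`
on `[0,1]`: there `v' + R₁ v ≤ b (D+1)(1+R₁) t^D = e^(-R₁)(1+R₁) c̄ t^D ≤ c̄ t^D ≤ u' + R₁ u`.
Since also `v 0 = 0 ≤ u 0`, the integrating factor `e^(R₁ t)` makes `e^(R₁ t) (u - v)` nondecreasing,
so `v ≤ u` on `[0,1]`.
-/

open Set Real

theorem le_of_hasDerivWithinAt_add_mul_le {u v u' v' : ℝ → ℝ} {a b R : ℝ}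
    (hu : ContinuousOn u (Icc a b)) (hv : ContinuousOn v (Icc a b))
    (hu' : ∀ x ∈ Ico a b, HasDerivWithinAt u (u' x) (Ici x) x)
    (hv' : ∀ x ∈ Ico a b, HasDerivWithinAt v (v' x) (Ici x) x)
    (ha : v a ≤ u a) (hbound : ∀ x ∈ Ico a b, v' x + R * v x ≤ u' x + R * u x) :
    ∀ ⦃x⦄, x ∈ Icc a b → v x ≤ u x := by
  have hexp (x : ℝ) : HasDerivAt (fun x => exp (R * x)) (exp (R * x) * R) x := by
    simpa using ((hasDerivAt_id x).const_mul R).exp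
  have hmono := image_le_of_deriv_right_le_deriv_boundary (a := a) (b := b) (f := fun _ => 0)
    (f' := fun _ => 0) (B := fun x => exp (R * x) * (u x - v x))
    (B' := fun x => exp (R * x) * R * (u x - v x) + exp (R * x) * (u' x - v' x))
    continuousOn_const (fun x _ => hasDerivWithinAt_const _ _ _)
    (mul_nonneg (exp_pos _).le (sub_nonneg.2 ha))
    ((continuous_exp.comp (continuous_const_mul R)).continuousOn.mul (hu.sub hv))
    (fun x hx => (hexp x).hasDerivWithinAt.mul ((hu' x hx).sub (hv' x hx)))
    (fun x hx => by
      have := mul_le_mul_of_nonneg_left (hbound x hx) (exp_pos (R * x)).le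
      linarith)
  intro x hx
  exact sub_nonneg.1 (nonneg_of_mul_nonneg_right (hmono hx) (exp_pos _))

theorem hasDerivAt_const_mul_rpow_add_one {D : ℝ} (hD : 0 ≤ D) (k t : ℝ) :
    HasDerivAt (fun t => k * t ^ (D + 1)) (k * ((D + 1) * t ^ D)) t := by
  simpa using (hasDerivAt_rpow_const (x := t) (p := D + 1) (Or.inr (by linarith))).const_mul k

theorem rpow_barrier_deriv_add_mul_le {R D c t : ℝ} (hR : 0 ≤ R) (hD : 0 ≤ D) (hc : 0 ≤ c)
    (ht : t ∈ Icc (0 : ℝ) 1) :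
    exp (-R) * c / (D + 1) * ((D + 1) * t ^ D) + R * (exp (-R) * c / (D + 1) * t ^ (D + 1))
      ≤ c * t ^ D := by
  have hpow : t ^ (D + 1) ≤ (D + 1) * t ^ D :=
    (rpow_le_rpow_of_exponent_ge' ht.1 ht.2 hD (by linarith)).trans
      (le_mul_of_one_le_left (rpow_nonneg ht.1 D) (by linarith))
  have hexp : exp (-R) * (1 + R) ≤ 1 := by
    rw [exp_neg, inv_mul_le_iff₀ (exp_pos R), mul_one, add_comm]
    exact add_one_le_exp R
  calc exp (-R) * c / (D + 1) * ((D + 1) * t ^ D) + R * (exp (-R) * c / (D + 1) * t ^ (D + 1))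
      ≤ exp (-R) * c / (D + 1) * ((D + 1) * t ^ D)
          + R * (exp (-R) * c / (D + 1) * ((D + 1) * t ^ D)) := by gcongr
    _ = exp (-R) * (1 + R) * (c * t ^ D) := by field_simp
    _ ≤ c * t ^ D := mul_le_of_le_one_left (mul_nonneg hc (rpow_nonneg ht.1 D)) hexp

/-- ODE comparison lemma: if `u(0) ≥ 0` and `u̇(t) ≥ c̄ t^D − R₁ u(t)` on `[0,1]`,
then `u(t) ≥ b t^{D+1}` with `b = e^{−R₁} c̄/(D+1)`. -/
theorem stmt12 (R1 D cb : ℝ) (hR1 : 0 < R1) (hD : 0 ≤ D) (hcb : 0 < cb)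
    (u : ℝ → ℝ) (hu0 : 0 ≤ u 0)
    (hdiff : ∀ t ∈ Set.Icc (0 : ℝ) 1, DifferentiableAt ℝ u t)
    (hineq : ∀ t ∈ Set.Icc (0 : ℝ) 1, cb * t ^ D - R1 * u t ≤ deriv u t) :
    ∀ t ∈ Set.Icc (0 : ℝ) 1,
      (Real.exp (-R1) * cb / (D + 1)) * t ^ (D + 1) ≤ u t := by
  have hbarrier := hasDerivAt_const_mul_rpow_add_one hD (Real.exp (-R1) * cb / (D + 1))
  refine le_of_hasDerivWithinAt_add_mul_le (R := R1)
    (fun t ht => (hdiff t ht).continuousAt.continuousWithinAt)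
    (fun t _ => (hbarrier t).continuousAt.continuousWithinAt)
    (fun t ht => (hdiff t (Ico_subset_Icc_self ht)).hasDerivAt.hasDerivWithinAt)
    (fun t _ => (hbarrier t).hasDerivWithinAt) ?_ ?_
  · simpa [zero_rpow (by linarith : D + 1 ≠ 0)] using hu0
  · intro t ht
    have hu := hineq t (Ico_subset_Icc_self ht)
    have hv := rpow_barrier_deriv_add_mul_le hR1.le hD hcb.le (Ico_subset_Icc_self ht)
    linarith
end
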